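/- arXiv:1707.09429 — 2 statements merged into one kernel-verified Lean document; each statement's English description precedes it below -/
import Mathlib

section
/- (Theorem 2.5) Assume the polynomials f_1,…,f_r and h_1,…,h_t are all sos-concave. Then for every k ≥ d, the semidefinite relaxation set S_k equals C ∩ H. No assumption that C or H has nonempty interior is needed. -/
open MvPolynomial Finsupp

noncomputable section

/-- The total degree `|α|` of a multi-index `α ∈ ℕ^n`. -/
def mdeg {n : ℕ} (α : Fin n →₀ ℕ) : ℕ := ∑ i, α i

/-- `⌈m/2⌉` for a natural number `m`. -/
def halfCeil (m : ℕ) : ℕ := (m + 1) / 2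

/-- The Riesz functional `R_y(f) = ∑_γ f_γ y_γ`. -/
def Riesz {n : ℕ} (y : (Fin n →₀ ℕ) → ℝ) (f : MvPolynomial (Fin n) ℝ) : ℝ :=
  ∑ γ ∈ f.support, f.coeff γ * y γ

/-- The `k`-th localizing matrix `L_f^{(k)}[y]`, indexed by multi-indices; its
`(α,β)` entry is `∑_γ f_γ y_{α+β+γ}` when `|α|,|β| ≤ s := k - ⌈deg f / 2⌉` (and `0` otherwise). -/
def locMat {n : ℕ} (k : ℕ) (f : MvPolynomial (Fin n) ℝ) (y : (Fin n →₀ ℕ) → ℝ) :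
    Matrix (Fin n →₀ ℕ) (Fin n →₀ ℕ) ℝ := fun α β =>
  if mdeg α ≤ k - halfCeil f.totalDegree ∧ mdeg β ≤ k - halfCeil f.totalDegree then
    ∑ γ ∈ f.support, f.coeff γ * y (α + β + γ)
  else 0

/-- Positive semidefiniteness of a (block-finitely supported) matrix indexed by multi-indices:
symmetry together with nonnegativity of the quadratic form on all finitely supported vectors. -/
def IsPSD {n : ℕ} (M : Matrix (Fin n →₀ ℕ) (Fin n →₀ ℕ) ℝ) : Prop :=
  (∀ α β, M α β = M β α) ∧
  ∀ v : (Fin n →₀ ℕ) →₀ ℝ, 0 ≤ ∑ α ∈ v.support, ∑ β ∈ v.support, v α * M α β * v β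

/-- The evaluation `u^α` of a monomial with multi-index `α` at a point `u`. -/
def monoEval {n : ℕ} (u : Fin n → ℝ) (α : Fin n →₀ ℕ) : ℝ := ∏ i, u i ^ α i

/-- The finite set of multi-indices `α ∈ ℕ^n` with `|α| ≤ D`. -/
def degLE (n D : ℕ) : Finset (Fin n →₀ ℕ) :=
  (Finset.Iic (Finsupp.equivFunOnFinite.symm fun _ : Fin n => D)).filter fun α => mdeg α ≤ D

end

/-- A polynomial `f` is sos-convex if there is a matrix polynomial `P(x) ∈ ℝ[x]^{ℓ×n}` with
`∇²f(x) = P(x)ᵀP(x)` identically, i.e. `∂²f/∂xᵢ∂xⱼ = ∑_l P_{l i} P_{l j}`. -/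
def SosConvex {n : ℕ} (f : MvPolynomial (Fin n) ℝ) : Prop :=
  ∃ (L : ℕ) (P : Fin L → Fin n → MvPolynomial (Fin n) ℝ),
    ∀ i j : Fin n,
      MvPolynomial.pderiv i (MvPolynomial.pderiv j f) = ∑ l, P l i * P l j

/-- A polynomial `f` is sos-concave if `-f` is sos-convex. -/
def SosConcave {n : ℕ} (f : MvPolynomial (Fin n) ℝ) : Prop := SosConvex (-f)

/-!
A point `x ∈ C ∩ H` lies in `S_k`: the moments `y_α = x^α` of the Dirac measure at `x` are
feasible, as `L_f^{(k)}[y] = f(x) v vᵀ` with `v_α = x^α`.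

Conversely, let `y` be feasible with first moments `x` and write `L_y` for the Riesz functional.
An sos-convex `g` of degree `≤ 2k` satisfies Jensen's inequality `g(x) ≤ L_y(g)`. Indeed,
restrict `g` to the line `t ↦ x + t (X - x)` and expand by Taylor's formula with integral
remainder: `g = g(x) + ∇g(x)·(X - x) + ∫₀¹ (1 - s) ∑_l q_{l,s}² ds`, where `∇²g = Pᵀ P` and
`q_{l,s} = ∑_i P_{li}(x + s (X - x)) (X_i - x_i)`. Since `∑_l P_{li}²` is a second derivative
of `g`, each `P_{li}` has degree `≤ k - 1`, so `q_{l,s}` has degree `≤ k`. The functional `L_y`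
kills the linear term because `L_y(X_i) = x_i`, and it is nonnegative on `q_{l,s}²` because the
moment matrix is positive semidefinite. For sos-concave `f` this gives `f(x) ≥ L_y(f) ≥ 0`,
where the last inequality is the `(0,0)` entry of `L_f^{(k)}[y]`.
-/

lemma mdeg_eq_degree {n : ℕ} (α : Fin n →₀ ℕ) : mdeg α = α.degree :=
  (Finsupp.degree_eq_sum α).symm

lemma degree_le_totalDegree {σ R : Type*} [CommSemiring R] {p : MvPolynomial σ R}
    {α : σ →₀ ℕ} (hα : α ∈ p.support) : α.degree ≤ p.totalDegree :=
  le_totalDegree hα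

lemma halfCeil_le_iff {m k : ℕ} : halfCeil m ≤ k ↔ m ≤ 2 * k := by
  rw [halfCeil, Nat.div_le_iff_le_mul_add_pred (by norm_num)]; omega

section Riesz

variable {n : ℕ} (y : (Fin n →₀ ℕ) → ℝ)

lemma riesz_eq_linearCombination (p : MvPolynomial (Fin n) ℝ) :
    Riesz y p = Finsupp.linearCombination ℝ y (AddMonoidAlgebra.coeffLinearEquiv ℝ p) := by
  simp [Riesz, Finsupp.linearCombination_apply, Finsupp.sum, MvPolynomial.coeff,
    MvPolynomial.support]

lemma riesz_sum {ι : Type*} (s : Finset ι) (p : ι → MvPolynomial (Fin n) ℝ) :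
    Riesz y (∑ i ∈ s, p i) = ∑ i ∈ s, Riesz y (p i) := by
  simp only [riesz_eq_linearCombination, map_sum]

lemma riesz_add (p q : MvPolynomial (Fin n) ℝ) : Riesz y (p + q) = Riesz y p + Riesz y q := by
  simp only [riesz_eq_linearCombination, map_add]

lemma riesz_smul (c : ℝ) (p : MvPolynomial (Fin n) ℝ) : Riesz y (c • p) = c * Riesz y p := by
  simp only [riesz_eq_linearCombination, map_smul, smul_eq_mul]

lemma riesz_neg (p : MvPolynomial (Fin n) ℝ) : Riesz y (-p) = -Riesz y p := by
  simp only [riesz_eq_linearCombination, map_neg]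

lemma riesz_sub (p q : MvPolynomial (Fin n) ℝ) : Riesz y (p - q) = Riesz y p - Riesz y q := by
  simp only [riesz_eq_linearCombination, map_sub]

lemma riesz_monomial (γ : Fin n →₀ ℕ) (c : ℝ) : Riesz y (monomial γ c) = c * y γ := by
  classical
  rw [Riesz, support_monomial]
  split_ifs with hc <;> simp [hc]

lemma riesz_C (c : ℝ) : Riesz y (C c) = c * y 0 := riesz_monomial y 0 c

lemma riesz_X (i : Fin n) : Riesz y (X i) = y (single i 1) := by
  rw [X, riesz_monomial, one_mul]

lemma riesz_mul (p q : MvPolynomial (Fin n) ℝ) :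
    Riesz y (p * q) =
      ∑ α ∈ p.support, ∑ β ∈ q.support, p.coeff α * q.coeff β * y (α + β) := by
  conv_lhs => rw [p.as_sum, q.as_sum, Finset.sum_mul_sum]
  simp only [riesz_sum, monomial_mul, riesz_monomial]

lemma riesz_eval_C {V : Polynomial (MvPolynomial (Fin n) ℝ)} {N : ℕ}
    (hN : V.natDegree < N) (s : ℝ) :
    Riesz y (V.eval (C s)) = ∑ m ∈ Finset.range N, Riesz y (V.coeff m) * s ^ m := by
  rw [Polynomial.eval_eq_sum_range' hN, riesz_sum]
  refine Finset.sum_congr rfl fun m _ => ?_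
  rw [← map_pow, mul_comm, ← smul_eq_C_mul, riesz_smul, mul_comm]

variable {y}

lemma riesz_nonneg_of_isPSD {k : ℕ} {p : MvPolynomial (Fin n) ℝ} (h : IsPSD (locMat k p y)) :
    0 ≤ Riesz y p := by
  simpa [locMat, mdeg, Riesz] using h.2 (single 0 1)

lemma locMat_one_apply (k : ℕ) (α β : Fin n →₀ ℕ) :
    locMat k 1 y α β = if mdeg α ≤ k ∧ mdeg β ≤ k then y (α + β) else 0 := by
  simp [locMat, halfCeil]

lemma riesz_mul_self_nonneg {k : ℕ} (h : IsPSD (locMat k 1 y)) {p : MvPolynomial (Fin n) ℝ}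
    (hp : p.totalDegree ≤ k) : 0 ≤ Riesz y (p * p) := by
  have hdeg : ∀ α ∈ p.support, mdeg α ≤ k := fun α hα =>
    mdeg_eq_degree α ▸ (degree_le_totalDegree hα).trans hp
  refine (h.2 (AddMonoidAlgebra.coeffLinearEquiv ℝ p)).trans_eq ?_
  rw [riesz_mul]
  refine Finset.sum_congr rfl fun α hα => Finset.sum_congr rfl fun β hβ => ?_
  rw [locMat_one_apply, if_pos ⟨hdeg α hα, hdeg β hβ⟩, mul_right_comm]
  rfl

end Riesz

section DiracMoments

variable {n : ℕ} (u : Fin n → ℝ)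

lemma monoEval_zero : monoEval u 0 = 1 := by simp [monoEval]

lemma monoEval_single (i : Fin n) : monoEval u (single i 1) = u i := by
  simp [monoEval, Finsupp.single_apply, Finset.prod_ite_eq]

lemma monoEval_add (α β : Fin n →₀ ℕ) :
    monoEval u (α + β) = monoEval u α * monoEval u β := by
  simp only [monoEval, Finsupp.add_apply, pow_add, Finset.prod_mul_distrib]

lemma eval_eq_riesz_monoEval (p : MvPolynomial (Fin n) ℝ) : eval u p = Riesz (monoEval u) p := by
  simp only [eval_eq', Riesz, monoEval]

lemma locMat_monoEval_apply (k : ℕ) (p : MvPolynomial (Fin n) ℝ) (α β : Fin n →₀ ℕ) :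
    locMat k p (monoEval u) α β =
      if mdeg α ≤ k - halfCeil p.totalDegree ∧ mdeg β ≤ k - halfCeil p.totalDegree then
        monoEval u α * monoEval u β * eval u p
      else 0 := by
  simp only [locMat, eval_eq_riesz_monoEval, Riesz, Finset.mul_sum, monoEval_add]
  congr! 2 with γ
  ring

lemma isPSD_locMat_monoEval (k : ℕ) {p : MvPolynomial (Fin n) ℝ} (hp : 0 ≤ eval u p) :
    IsPSD (locMat k p (monoEval u)) := by
  refine ⟨fun α β => by simp only [locMat_monoEval_apply, and_comm, mul_comm], fun v => ?_⟩
  set w : (Fin n →₀ ℕ) → ℝ := fun α =>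
    if mdeg α ≤ k - halfCeil p.totalDegree then v α * monoEval u α else 0
  have hentry (α β) : v α * locMat k p (monoEval u) α β * v β = w α * w β * eval u p := by
    by_cases hα : mdeg α ≤ k - halfCeil p.totalDegree <;>
      by_cases hβ : mdeg β ≤ k - halfCeil p.totalDegree <;>
      simp only [locMat_monoEval_apply, w, hα, hβ, and_self, and_true, and_false, ↓reduceIte,
        mul_zero, zero_mul]
    ring
  calc 0 ≤ (∑ α ∈ v.support, w α) * (∑ α ∈ v.support, w α) * eval u p :=
        mul_nonneg (mul_self_nonneg _) hp
    _ = ∑ α ∈ v.support, ∑ β ∈ v.support, v α * locMat k p (monoEval u) α β * v β := by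
        rw [Finset.sum_mul_sum]
        simp only [Finset.sum_mul, hentry]

end DiracMoments

section SumsOfSquares

lemma homogeneousComponent_add_mul {σ R : Type*} [CommSemiring R] {p q : MvPolynomial σ R}
    {D E : ℕ} (hp : p.totalDegree ≤ D) (hq : q.totalDegree ≤ E) :
    homogeneousComponent (D + E) (p * q) =
      homogeneousComponent D p * homogeneousComponent E q := by
  classical
  ext α
  rw [coeff_homogeneousComponent, coeff_mul, coeff_mul]
  have hterm : ∀ x ∈ Finset.HasAntidiagonal.antidiagonal α,
      coeff x.1 (homogeneousComponent D p) * coeff x.2 (homogeneousComponent E q) =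
        if α.degree = D + E then coeff x.1 p * coeff x.2 q else 0 := by
    intro x hx
    have hsum : x.1.degree + x.2.degree = α.degree := by
      rw [← map_add, Finset.HasAntidiagonal.mem_antidiagonal.mp hx]
    rw [coeff_homogeneousComponent, coeff_homogeneousComponent]
    by_cases h1 : coeff x.1 p = 0
    · simp [h1]
    by_cases h2 : coeff x.2 q = 0
    · simp [h2]
    have d1 := (degree_le_totalDegree (MvPolynomial.mem_support_iff.mpr h1)).trans hp
    have d2 := (degree_le_totalDegree (MvPolynomial.mem_support_iff.mpr h2)).trans hq
    split_ifs <;> first | rfl | omega | simp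
  rw [Finset.sum_congr rfl hterm]
  split_ifs <;> simp

lemma eq_zero_of_sum_mul_self_eq_zero {ι σ : Type*} [Fintype ι] {p : ι → MvPolynomial σ ℝ}
    (h : ∑ l, p l * p l = 0) (l : ι) : p l = 0 := by
  refine MvPolynomial.funext fun x => ?_
  have hsq : ∑ l, eval x (p l) * eval x (p l) = 0 := by simpa using congrArg (eval x) h
  rw [map_zero, ← mul_self_eq_zero]
  exact (Finset.sum_eq_zero_iff_of_nonneg fun l _ => mul_self_nonneg _).mp hsq l
    (Finset.mem_univ l)

/-- The top-degree parts of the squares cannot cancel. -/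
lemma totalDegree_le_of_totalDegree_sum_mul_self_le {ι σ : Type*} [Fintype ι]
    {p : ι → MvPolynomial σ ℝ} {e : ℕ} (h : (∑ l, p l * p l).totalDegree ≤ 2 * e)
    (l : ι) :
    (p l).totalDegree ≤ e := by
  by_contra! hlt
  set D := Finset.univ.sup fun l => (p l).totalDegree
  have hD : ∀ l, (p l).totalDegree ≤ D := fun l =>
    Finset.le_sup (f := fun l => (p l).totalDegree) (Finset.mem_univ l)
  obtain ⟨l₁, -, hl₁⟩ : ∃ l₁ ∈ Finset.univ, D = (p l₁).totalDegree :=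
    Finset.exists_mem_eq_sup _ ⟨l, Finset.mem_univ l⟩ _
  have htop : ∑ l, homogeneousComponent D (p l) * homogeneousComponent D (p l) = 0 := by
    rw [← homogeneousComponent_eq_zero (D + D) (∑ l, p l * p l) (by have := hD l; omega),
      map_sum]
    exact Finset.sum_congr rfl fun l _ => (homogeneousComponent_add_mul (hD l) (hD l)).symm
  have hne : p l₁ ≠ 0 := by
    rintro h0
    have := hD l
    rw [hl₁, h0, totalDegree_zero] at this
    omega
  obtain ⟨α, hα, hαD⟩ := Finset.exists_mem_eq_sup _ (support_nonempty.mpr hne) Finsupp.degree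
  have hcoeff := congrArg (coeff α) (eq_zero_of_sum_mul_self_eq_zero htop l₁)
  rw [coeff_homogeneousComponent, if_pos (hαD.symm.trans hl₁.symm), coeff_zero] at hcoeff
  exact MvPolynomial.mem_support_iff.mp hα hcoeff

end SumsOfSquares

section DegreeBounds

variable {σ R : Type*} [CommSemiring R]

lemma totalDegree_pderiv_le (i : σ) (p : MvPolynomial σ R) :
    (pderiv i p).totalDegree ≤ p.totalDegree - 1 := by
  classical
  conv_lhs => rw [p.as_sum, map_sum]
  refine totalDegree_finsetSum_le fun α hα => ?_
  rw [pderiv_monomial]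
  by_cases hαi : α i = 0
  · simp [hαi]
  have hsplit : α = (α - single i 1) + single i 1 :=
    (tsub_add_cancel_of_le (Finsupp.single_le_iff.mpr (Nat.one_le_iff_ne_zero.mpr hαi))).symm
  have hdeg : (α - single i 1).degree + 1 = α.degree := by
    conv_rhs => rw [hsplit, map_add, Finsupp.degree_single]
  have := degree_le_totalDegree hα
  exact (totalDegree_monomial_le _ _).trans (by change (α - single i 1).degree ≤ _; omega)

lemma totalDegree_aeval_le {τ : Type*} {v : σ → MvPolynomial τ R}
    (hv : ∀ i, (v i).totalDegree ≤ 1) (p : MvPolynomial σ R) :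
    (aeval v p).totalDegree ≤ p.totalDegree := by
  conv_lhs => rw [p.as_sum, map_sum]
  refine totalDegree_finsetSum_le fun α hα => ?_
  rw [aeval_monomial, algebraMap_eq]
  refine (totalDegree_mul _ _).trans ?_
  rw [totalDegree_C, zero_add]
  refine (totalDegree_finsetProd _ _).trans ((Finset.sum_le_sum fun i _ => ?_).trans
    (degree_le_totalDegree hα))
  exact (totalDegree_pow _ _).trans (by simpa using Nat.mul_le_mul_left (α i) (hv i))

lemma totalDegree_le_of_pderiv_pderiv_eq_sum_mul_self {ι : Type*} [Fintype ι] {k : ℕ}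
    {g : MvPolynomial σ ℝ} {P : ι → σ → MvPolynomial σ ℝ}
    (hP : ∀ i j, pderiv i (pderiv j g) = ∑ l, P l i * P l j) (hdeg : g.totalDegree ≤ 2 * k)
    (l : ι) (i : σ) : (P l i).totalDegree ≤ k - 1 := by
  refine totalDegree_le_of_totalDegree_sum_mul_self_le (p := fun l => P l i) ?_ l
  rw [← hP i i]
  have := (totalDegree_pderiv_le i _).trans (Nat.sub_le_sub_right (totalDegree_pderiv_le i g) 1)
  omega

end DegreeBounds

section ChainRule

open Polynomial (derivative)

lemma derivative_aeval_eq_sum_pderiv {σ R S : Type*} [Fintype σ] [CommSemiring R]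
    [CommSemiring S] [Algebra R S] (v : σ → Polynomial S) (p : MvPolynomial σ R) :
    derivative (aeval v p) = ∑ i, aeval v (pderiv i p) * derivative (v i) := by
  classical
  induction p using MvPolynomial.induction_on with
  | C a => simp
  | add p q hp hq => simp only [map_add, hp, hq, add_mul, Finset.sum_add_distrib]
  | mul_X p j hp =>
    simp only [map_mul, Polynomial.derivative_mul, hp, pderiv_mul, pderiv_X, Pi.single_apply,
      map_add, aeval_X, add_mul, Finset.sum_add_distrib, Finset.sum_mul, mul_ite, mul_one,
      mul_zero, apply_ite (aeval v), map_zero, ite_mul, zero_mul, Finset.sum_ite_eq,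
      Finset.mem_univ, if_true, mul_right_comm _ (v j)]

variable {σ R : Type*} [CommRing R] (x : σ → R)

/-- The line `t ↦ x + t (X - x)` from the point `x` to the generic point `X`. -/
noncomputable def lineThrough (i : σ) : Polynomial (MvPolynomial σ R) :=
  Polynomial.C (C (x i)) + Polynomial.C (X i - C (x i)) * Polynomial.X

lemma derivative_lineThrough (i : σ) :
    derivative (lineThrough x i) = Polynomial.C (X i - C (x i)) := by
  simp [lineThrough]

lemma eval_aeval_lineThrough (r : MvPolynomial σ R) (p : MvPolynomial σ R) :
    (aeval (lineThrough x) p).eval r = aeval (fun i => C (x i) + (X i - C (x i)) * r) p := by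
  rw [← Polynomial.coe_aeval_eq_eval, ← AlgHom.coe_restrictScalars' R, comp_aeval_apply]
  simp [lineThrough]

lemma eval_one_aeval_lineThrough (p : MvPolynomial σ R) :
    (aeval (lineThrough x) p).eval 1 = p := by
  simp [eval_aeval_lineThrough]

lemma eval_zero_aeval_lineThrough (p : MvPolynomial σ R) :
    (aeval (lineThrough x) p).eval 0 = C (eval x p) := by
  rw [eval_aeval_lineThrough, ← aeval_eq_eval, ← algebraMap_eq, ← Algebra.ofId_apply,
    comp_aeval_apply]
  simp

lemma derivative_aeval_lineThrough [Fintype σ] (p : MvPolynomial σ R) :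
    derivative (aeval (lineThrough x) p) =
      ∑ i, aeval (lineThrough x) (pderiv i p) * Polynomial.C (X i - C (x i)) := by
  simp only [derivative_aeval_eq_sum_pderiv, derivative_lineThrough]

lemma coeff_zero_aeval_lineThrough (p : MvPolynomial σ R) :
    (aeval (lineThrough x) p).coeff 0 = C (eval x p) := by
  rw [Polynomial.coeff_zero_eq_eval_zero, eval_zero_aeval_lineThrough]

lemma coeff_one_aeval_lineThrough [Fintype σ] (p : MvPolynomial σ R) :
    (aeval (lineThrough x) p).coeff 1 = ∑ i, C (eval x (pderiv i p)) * (X i - C (x i)) := by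
  have h := congrArg (Polynomial.eval 0) (derivative_aeval_lineThrough x p)
  rw [← Polynomial.coeff_zero_eq_eval_zero, Polynomial.coeff_derivative] at h
  simpa [Polynomial.eval_finsetSum, eval_zero_aeval_lineThrough] using h

lemma derivative_derivative_aeval_lineThrough [Fintype σ] {ι : Type*} [Fintype ι]
    {g : MvPolynomial σ R} {P : ι → σ → MvPolynomial σ R}
    (hP : ∀ i j, pderiv i (pderiv j g) = ∑ l, P l i * P l j) :
    derivative (derivative (aeval (lineThrough x) g)) =
      ∑ l, (∑ i, aeval (lineThrough x) (P l i) * Polynomial.C (X i - C (x i))) *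
        (∑ i, aeval (lineThrough x) (P l i) * Polynomial.C (X i - C (x i))) := by
  simp only [derivative_aeval_lineThrough, Polynomial.derivative_mul,
    Polynomial.derivative_C, mul_zero, add_zero, hP, map_sum, map_mul, Finset.sum_mul,
    Finset.mul_sum]
  refine (Finset.sum_congr rfl fun i _ => Finset.sum_comm).trans ?_
  rw [Finset.sum_comm]
  refine Finset.sum_congr rfl fun l _ => Finset.sum_congr rfl fun i _ =>
    Finset.sum_congr rfl fun j _ => ?_
  ring

end ChainRule

open Polynomial (derivative) in
/-- Taylor's formula at `0`, evaluated at `1`. -/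
lemma Polynomial.eval_one_eq_coeff_add_sum_coeff_derivative_derivative {K R : Type*} [Field K]
    [CharZero K] [CommRing R] [Algebra K R] (G : Polynomial R) {N : ℕ}
    (hN : G.natDegree < N + 2) :
    G.eval 1 = G.coeff 0 + G.coeff 1 + ∑ m ∈ Finset.range N,
      (((m + 1) * (m + 2) : ℕ) : K)⁻¹ • (derivative (derivative G)).coeff m := by
  have hcoeff (m : ℕ) : (derivative (derivative G)).coeff m =
      (((m + 1) * (m + 2) : ℕ) : K) • G.coeff (m + 2) := by
    rw [Polynomial.coeff_derivative, Polynomial.coeff_derivative, Nat.cast_smul_eq_nsmul,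
      nsmul_eq_mul]
    push_cast
    ring
  have hcancel (m : ℕ) : (((m + 1) * (m + 2) : ℕ) : K)⁻¹ •
      (((m + 1) * (m + 2) : ℕ) : K) • G.coeff (m + 2) = G.coeff (m + 2) :=
    inv_smul_smul₀ (Nat.cast_ne_zero.mpr (by positivity)) _
  simp only [hcoeff, hcancel]
  rw [Polynomial.eval_eq_sum_range' hN, Finset.sum_range_succ', Finset.sum_range_succ']
  simp only [one_pow, mul_one]
  ring

lemma integral_one_sub_mul_pow (m : ℕ) :
    ∫ s in (0 : ℝ)..1, (1 - s) * s ^ m = (((m + 1) * (m + 2) : ℕ) : ℝ)⁻¹ := by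
  have hsplit : (fun s : ℝ => (1 - s) * s ^ m) = fun s => s ^ m - s ^ (m + 1) := by
    ext s; ring
  rw [hsplit, intervalIntegral.integral_sub (by simp) (by simp), integral_pow, integral_pow]
  push_cast
  field_simp
  ring

/-- The sum is `∫₀¹ (1 - s) q(s) ds` for `q = ∑ c m X^m`. -/
lemma sum_inv_mul_nonneg_of_nonneg_on_unitInterval (c : ℕ → ℝ) (N : ℕ)
    (h : ∀ s ∈ Set.Icc (0 : ℝ) 1, 0 ≤ ∑ m ∈ Finset.range N, c m * s ^ m) :
    0 ≤ ∑ m ∈ Finset.range N, (((m + 1) * (m + 2) : ℕ) : ℝ)⁻¹ * c m := by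
  have hint : ∑ m ∈ Finset.range N, (((m + 1) * (m + 2) : ℕ) : ℝ)⁻¹ * c m =
      ∫ s in (0 : ℝ)..1, (1 - s) * ∑ m ∈ Finset.range N, c m * s ^ m := by
    simp_rw [Finset.mul_sum]
    rw [intervalIntegral.integral_finsetSum fun m _ =>
      (by fun_prop : Continuous _).intervalIntegrable _ _]
    refine Finset.sum_congr rfl fun m _ => ?_
    simp_rw [mul_left_comm (1 - _) (c m)]
    rw [intervalIntegral.integral_const_mul, integral_one_sub_mul_pow, mul_comm]
  rw [hint]
  exact intervalIntegral.integral_nonneg zero_le_one fun s hs =>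
    mul_nonneg (sub_nonneg.mpr hs.2) (h s hs)

section Jensen

variable {n : ℕ} {y : (Fin n →₀ ℕ) → ℝ}

lemma sum_inv_mul_riesz_coeff_mul_self_nonneg {k : ℕ} (hmom : IsPSD (locMat k 1 y))
    {W : Polynomial (MvPolynomial (Fin n) ℝ)} (hW : ∀ s : ℝ, (W.eval (C s)).totalDegree ≤ k)
    {N : ℕ} (hN : (W * W).natDegree < N) :
    0 ≤ ∑ m ∈ Finset.range N,
      (((m + 1) * (m + 2) : ℕ) : ℝ)⁻¹ * Riesz y ((W * W).coeff m) :=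
  sum_inv_mul_nonneg_of_nonneg_on_unitInterval _ N fun s _ => by
    rw [← riesz_eval_C y hN, Polynomial.eval_mul]
    exact riesz_mul_self_nonneg hmom (hW s)

lemma riesz_coeff_one_aeval_lineThrough (hy0 : y 0 = 1) (p : MvPolynomial (Fin n) ℝ) :
    Riesz y ((aeval (lineThrough fun i => y (single i 1)) p).coeff 1) = 0 := by
  simp [coeff_one_aeval_lineThrough, riesz_sum, mul_sub, C_mul', riesz_sub, riesz_smul,
    riesz_X, riesz_C, hy0]

lemma totalDegree_eval_lineThrough_le {k : ℕ} (x : Fin n → ℝ) {L : ℕ}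
    {P : Fin L → Fin n → MvPolynomial (Fin n) ℝ} (hP : ∀ l i, (P l i).totalDegree + 1 ≤ k)
    (l : Fin L) (s : ℝ) :
    ((∑ i, aeval (lineThrough x) (P l i) * Polynomial.C (X i - C (x i))).eval (C s)).totalDegree
      ≤ k := by
  simp only [Polynomial.eval_finsetSum, Polynomial.eval_mul, Polynomial.eval_C,
    eval_aeval_lineThrough]
  refine totalDegree_finsetSum_le fun i _ => (totalDegree_mul _ _).trans ?_
  have hX : ∀ j, (X j - C (x j) : MvPolynomial (Fin n) ℝ).totalDegree ≤ 1 := fun j =>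
    (totalDegree_sub_C_le _ _).trans (totalDegree_X j).le
  have hline (j) : (C (x j) + (X j - C (x j)) * C s : MvPolynomial (Fin n) ℝ).totalDegree ≤ 1 :=
    (totalDegree_add _ _).trans <| max_le (by simp) <|
      (totalDegree_mul _ _).trans (by simpa using hX j)
  have := totalDegree_aeval_le hline (P l i)
  have := hX i
  have := hP l i
  omega

theorem eval_le_riesz_of_sosConvex {k : ℕ} (hy0 : y 0 = 1) (hmom : IsPSD (locMat k 1 y))
    {g : MvPolynomial (Fin n) ℝ} (hg : SosConvex g) (hdeg : g.totalDegree ≤ 2 * k) :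
    eval (fun i => y (single i 1)) g ≤ Riesz y g := by
  set x : Fin n → ℝ := fun i => y (single i 1)
  obtain ⟨L, P, hP⟩ := hg
  rcases Nat.eq_zero_or_pos k with rfl | hk
  · rw [totalDegree_eq_zero_iff_eq_C (p := g) |>.mp (by omega), eval_C, riesz_C, hy0, mul_one]
  have hPdeg : ∀ l i, (P l i).totalDegree + 1 ≤ k := fun l i => by
    have := totalDegree_le_of_pderiv_pderiv_eq_sum_mul_self hP hdeg l i
    omega
  set G := aeval (lineThrough x) g
  set Q : Fin L → Polynomial (MvPolynomial (Fin n) ℝ) :=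
    fun l => ∑ i, aeval (lineThrough x) (P l i) * Polynomial.C (X i - C (x i))
  have hQdeg : ∀ l (s : ℝ), ((Q l).eval (C s)).totalDegree ≤ k :=
    totalDegree_eval_lineThrough_le x hPdeg
  have hG'' : Polynomial.derivative (Polynomial.derivative G) = ∑ l, Q l * Q l :=
    derivative_derivative_aeval_lineThrough x hP
  clear_value Q
  set N := G.natDegree + ∑ l, (Q l * Q l).natDegree + 1
  have htaylor := Polynomial.eval_one_eq_coeff_add_sum_coeff_derivative_derivative (K := ℝ) G
    (N := N) (by omega)
  rw [eval_one_aeval_lineThrough, hG'', coeff_zero_aeval_lineThrough] at htaylor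
  have hremainder : ∀ l, 0 ≤ ∑ m ∈ Finset.range N,
      (((m + 1) * (m + 2) : ℕ) : ℝ)⁻¹ * Riesz y ((Q l * Q l).coeff m) := fun l =>
    sum_inv_mul_riesz_coeff_mul_self_nonneg hmom (hQdeg l) (by
      have := Finset.single_le_sum (f := fun l => (Q l * Q l).natDegree)
        (fun l _ => Nat.zero_le _) (Finset.mem_univ l)
      omega)
  have hRiesz : Riesz y g = eval x g + ∑ l, ∑ m ∈ Finset.range N,
      (((m + 1) * (m + 2) : ℕ) : ℝ)⁻¹ * Riesz y ((Q l * Q l).coeff m) := by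
    conv_lhs => rw [htaylor]
    rw [riesz_add, riesz_add, riesz_C, hy0, mul_one, riesz_coeff_one_aeval_lineThrough hy0,
      add_zero, Finset.sum_comm]
    simp only [riesz_sum, riesz_smul, Polynomial.finsetSum_coeff, Finset.mul_sum]
  rw [hRiesz]
  exact le_add_of_nonneg_right (Finset.sum_nonneg fun l _ => hremainder l)

end Jensen

lemma eval_nonneg_of_sosConcave {n k : ℕ} {y : (Fin n →₀ ℕ) → ℝ} (hy0 : y 0 = 1)
    (hmom : IsPSD (locMat k 1 y)) {p : MvPolynomial (Fin n) ℝ} (hp : SosConcave p)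
    (hdeg : halfCeil p.totalDegree ≤ k) (hloc : IsPSD (locMat k p y)) :
    0 ≤ eval (fun i => y (single i 1)) p := by
  have hjensen := eval_le_riesz_of_sosConvex hy0 hmom hp
    (by rwa [totalDegree_neg, ← halfCeil_le_iff])
  rw [map_neg, riesz_neg] at hjensen
  linarith [riesz_nonneg_of_isPSD hloc]

theorem relaxation_exact_of_sos_concave_general {n r t : ℕ}
    (f : Fin r → MvPolynomial (Fin n) ℝ)
    (h : Fin t → MvPolynomial (Fin n) ℝ)
    (hfconc : ∀ i, SosConcave (f i)) (hhconc : ∀ j, SosConcave (h j))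
    (C H : Set (Fin n → ℝ))
    (hC : C = {x | ∀ i, 0 ≤ MvPolynomial.eval x (f i)})
    (hH : H = {x | ∀ j, 0 ≤ MvPolynomial.eval x (h j)})
    (d : ℕ)
    (hd : d = max (Finset.univ.sup fun i => halfCeil (f i).totalDegree)
                  (Finset.univ.sup fun j => halfCeil (h j).totalDegree))
    (S : ℕ → Set (Fin n → ℝ))
    (hS : ∀ k, S k = {x | ∃ y : (Fin n →₀ ℕ) → ℝ, y 0 = 1 ∧
        (∀ i : Fin n, x i = y (Finsupp.single i 1)) ∧
        IsPSD (locMat k (1 : MvPolynomial (Fin n) ℝ) y) ∧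
        (∀ i, IsPSD (locMat k (f i) y)) ∧
        (∀ j, IsPSD (locMat k (h j) y))}) :
    ∀ k, d ≤ k → S k = C ∩ H := by
  intro k hk
  have hfdeg : ∀ i, halfCeil (f i).totalDegree ≤ k := fun i =>
    (le_max_of_le_left (Finset.le_sup (f := fun i => halfCeil (f i).totalDegree)
      (Finset.mem_univ i))).trans (hd ▸ hk)
  have hhdeg : ∀ j, halfCeil (h j).totalDegree ≤ k := fun j =>
    (le_max_of_le_right (Finset.le_sup (f := fun j => halfCeil (h j).totalDegree)
      (Finset.mem_univ j))).trans (hd ▸ hk)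
  rw [hS k, hC, hH]
  ext x
  constructor
  · rintro ⟨y, hy0, hxy, hmom, hfloc, hhloc⟩
    obtain rfl : x = fun i => y (single i 1) := funext hxy
    exact ⟨fun i => eval_nonneg_of_sosConcave hy0 hmom (hfconc i) (hfdeg i) (hfloc i),
      fun j => eval_nonneg_of_sosConcave hy0 hmom (hhconc j) (hhdeg j) (hhloc j)⟩
  · rintro ⟨hxC, hxH⟩
    exact ⟨monoEval x, monoEval_zero x, fun i => (monoEval_single x i).symm,
      isPSD_locMat_monoEval x k (by simp), fun i => isPSD_locMat_monoEval x k (hxC i),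
      fun j => isPSD_locMat_monoEval x k (hxH j)⟩

/-- **Theorem 2.5.** If all the polynomials `f_i` and `h_j` are sos-concave,
then the semidefinite relaxation set `S_k` equals `C ∩ H` for every `k ≥ d`.
No nonempty-interior assumption on `C` or `H` is needed. -/
theorem relaxation_exact_of_sos_concave {n m r t : ℕ}
    (f : Fin r → MvPolynomial (Fin n) ℝ) (g : Fin t → MvPolynomial (Fin m) ℝ)
    (A : Matrix (Fin m) (Fin n) ℝ)
    (h : Fin t → MvPolynomial (Fin n) ℝ)
    (hh : ∀ j, h j = MvPolynomial.aeval
      (fun i : Fin m => ∑ l : Fin n, MvPolynomial.C (A i l) * MvPolynomial.X l) (g j))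
    (hfconc : ∀ i, SosConcave (f i)) (hhconc : ∀ j, SosConcave (h j))
    (C H : Set (Fin n → ℝ))
    (hC : C = {x | ∀ i, 0 ≤ MvPolynomial.eval x (f i)})
    (hH : H = {x | ∀ j, 0 ≤ MvPolynomial.eval x (h j)})
    (d : ℕ)
    (hd : d = max (Finset.univ.sup fun i => halfCeil (f i).totalDegree)
                  (Finset.univ.sup fun j => halfCeil (h j).totalDegree))
    (S : ℕ → Set (Fin n → ℝ))
    (hS : ∀ k, S k = {x | ∃ y : (Fin n →₀ ℕ) → ℝ, y 0 = 1 ∧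
        (∀ i : Fin n, x i = y (Finsupp.single i 1)) ∧
        IsPSD (locMat k (1 : MvPolynomial (Fin n) ℝ) y) ∧
        (∀ i, IsPSD (locMat k (f i) y)) ∧
        (∀ j, IsPSD (locMat k (h j) y))}) :
    ∀ k, d ≤ k → S k = C ∩ H :=
  relaxation_exact_of_sos_concave_general f h hfconc hhconc C H hC hH d hd S hS
end

section
/- Suppose Assumption AC holds: there exist sos polynomials a_0, a_1,…,a_r, b_1,…,b_t and R > 0 with R − ‖[x]_d‖² = a_0 + ∑_i a_i f_i + ∑_j b_j h_j identically, deg(a_i f_i) ≤ 2d and deg(b_j h_j) ≤ 2d. Let k ≥ d and let y ∈ ℝ^{ℕ^n_{2k}} satisfy y_0 = 1, L_1^{(k)}[y] ⪰ 0, L_{f_i}^{(k)}[y] ⪰ 0 for all i, and L_{h_j}^{(k)}[y] ⪰ 0 for all j. Then for every multi-index θ with |θ| ≤ k − d, one has R·y_{2θ} ≥ ∑_{|β|≤d} y_{2β+2θ}. -/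
/-
Apply the additive functional `p ↦ L_y(x^{2θ} p)` to the certificate. It sends
`R - ‖[x]_d‖²` to `R y_{2θ} - ∑_{|β| ≤ d} y_{2β+2θ}`. Each term `σ F` of the right-hand side, with
`σ = ∑ p_l²` and `F ∈ {1, f_i, h_j}`, goes to a sum of values of the quadratic form of the
positive semidefinite matrix `L_F^{(k)}[y]` at the coefficient vectors of `x^θ p_l`. These vectors
lie in the index range of that matrix because over `ℝ` the degree of a sum of squares is twice the
largest degree of its summands, so `2 deg p_l + deg F ≤ 2d` and `|θ| + d ≤ k`.
-/

open MvPolynomial Finsupp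

/-- A sum-of-squares (sos) polynomial. -/
def IsSos {n : ℕ} (σ : MvPolynomial (Fin n) ℝ) : Prop :=
  ∃ (L : ℕ) (p : Fin L → MvPolynomial (Fin n) ℝ), σ = ∑ l, p l ^ 2

/-- The polynomial `‖[x]_D‖² = ∑_{|β| ≤ D} x^{2β}`. -/
noncomputable def monVecSq (n D : ℕ) : MvPolynomial (Fin n) ℝ :=
  ∑ β ∈ degLE n D, (MvPolynomial.monomial β (1 : ℝ)) ^ 2

namespace MvPolynomial
variable {σ R : Type*}

section CommSemiring
variable [CommSemiring R]

theorem homogeneousComponent_add_mul {p q : MvPolynomial σ R} {a b : ℕ}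
    (hp : p.totalDegree ≤ a) (hq : q.totalDegree ≤ b) :
    homogeneousComponent (a + b) (p * q) =
      homogeneousComponent a p * homogeneousComponent b q := by
  have sum_range {φ : MvPolynomial σ R} {c : ℕ} (hφ : φ.totalDegree ≤ c) :
      ∑ i ∈ Finset.range (c + 1), homogeneousComponent i φ = φ := by
    conv_rhs => rw [← sum_homogeneousComponent φ]
    refine (Finset.sum_subset (Finset.range_subset_range.mpr (by omega)) fun i _ hi => ?_).symm
    exact homogeneousComponent_eq_zero i φ (by simp only [Finset.mem_range] at hi; omega)
  have component_mul (i j : ℕ) :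
      homogeneousComponent (a + b) (homogeneousComponent i p * homogeneousComponent j q) =
        if a + b = i + j then homogeneousComponent i p * homogeneousComponent j q else 0 :=
    homogeneousComponent_of_mem
      ((homogeneousComponent_isHomogeneous i p).mul (homogeneousComponent_isHomogeneous j q))
  conv_lhs => rw [← sum_range hp, ← sum_range hq]
  simp_rw [Finset.sum_mul_sum, map_sum, component_mul]
  rw [Finset.sum_eq_single_of_mem a (Finset.self_mem_range_succ a) fun i hi hia =>
      Finset.sum_eq_zero fun j hj => if_neg ?_,
    Finset.sum_eq_single_of_mem b (Finset.self_mem_range_succ b) fun j _ hjb => if_neg ?_,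
    if_pos rfl]
  · omega
  · simp only [Finset.mem_range] at hi hj
    omega

theorem homogeneousComponent_totalDegree_ne_zero {p : MvPolynomial σ R} (hp : p ≠ 0) :
    homogeneousComponent p.totalDegree p ≠ 0 := by
  obtain ⟨γ, hγ, hγdeg⟩ := Finset.exists_mem_eq_sup p.support (support_nonempty.mpr hp)
    fun γ => γ.sum fun _ e => e
  intro h
  have hcoeff := congrArg (coeff γ) h
  rw [coeff_homogeneousComponent, if_pos (by rw [totalDegree, hγdeg]; rfl), coeff_zero] at hcoeff
  exact mem_support_iff.mp hγ hcoeff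

end CommSemiring

theorem two_mul_totalDegree_le_totalDegree_sum_sq [Field R] [LinearOrder R]
    [IsStrictOrderedRing R] {ι : Type*} (s : Finset ι) (p : ι → MvPolynomial σ R) {l : ι}
    (hl : l ∈ s) : 2 * (p l).totalDegree ≤ (∑ i ∈ s, p i ^ 2).totalDegree := by
  obtain ⟨l₀, hl₀, hmax⟩ := Finset.exists_max_image s (fun i => (p i).totalDegree) ⟨l, hl⟩
  set D := (p l₀).totalDegree
  by_cases hp₀ : p l₀ = 0
  · have hl_le := hmax l hl
    simp only [D, hp₀, totalDegree_zero] at hl_le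
    omega
  have top_component : homogeneousComponent (D + D) (∑ i ∈ s, p i ^ 2) =
      ∑ i ∈ s, homogeneousComponent D (p i) ^ 2 := by
    simp_rw [map_sum, sq]
    exact Finset.sum_congr rfl fun i hi => homogeneousComponent_add_mul (hmax i hi) (hmax i hi)
  obtain ⟨u, hu⟩ : ∃ u, eval u (homogeneousComponent D (p l₀)) ≠ 0 := by
    by_contra! h
    exact homogeneousComponent_totalDegree_ne_zero hp₀
      (MvPolynomial.funext fun u => by simpa using h u)
  have top_ne_zero : homogeneousComponent (D + D) (∑ i ∈ s, p i ^ 2) ≠ 0 := by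
    intro h
    have heval := congrArg (eval u) h
    rw [top_component, map_sum, map_zero] at heval
    simp only [map_pow] at heval
    exact hu (pow_eq_zero_iff two_ne_zero |>.mp
      ((Finset.sum_eq_zero_iff_of_nonneg fun i _ => sq_nonneg _).mp heval l₀ hl₀))
  have hl_le := hmax l hl
  have hD_le : D + D ≤ (∑ i ∈ s, p i ^ 2).totalDegree := by
    by_contra! h
    exact top_ne_zero (homogeneousComponent_eq_zero _ _ h)
  omega

theorem totalDegree_sub_le_of_le [CommRing R] {p q : MvPolynomial σ R} {D : ℕ}
    (hp : p.totalDegree ≤ D) (hq : q.totalDegree ≤ D) : (p - q).totalDegree ≤ D :=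
  (totalDegree_sub p q).trans (max_le hp hq)

end MvPolynomial

section Riesz

variable {n : ℕ}

lemma mdeg_eq_sum (α : Fin n →₀ ℕ) : mdeg α = α.sum fun _ e => e :=
  (Finsupp.sum_fintype α (fun _ e => e) fun _ => rfl).symm

lemma totalDegree_monomial_one_mul_le (θ : Fin n →₀ ℕ) (p : MvPolynomial (Fin n) ℝ) :
    (monomial θ 1 * p).totalDegree ≤ mdeg θ + p.totalDegree := by
  rw [mdeg_eq_sum, ← totalDegree_monomial θ (one_ne_zero : (1 : ℝ) ≠ 0)]
  exact totalDegree_mul _ _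

lemma Riesz_eq_sum_of_support_subset (y : (Fin n →₀ ℕ) → ℝ) {p : MvPolynomial (Fin n) ℝ}
    {S : Finset (Fin n →₀ ℕ)} (hS : p.support ⊆ S) :
    Riesz y p = ∑ γ ∈ S, p.coeff γ * y γ :=
  Finset.sum_subset hS fun γ _ hγ => by rw [MvPolynomial.notMem_support_iff.mp hγ, zero_mul]

lemma Riesz_add (y : (Fin n →₀ ℕ) → ℝ) (p q : MvPolynomial (Fin n) ℝ) :
    Riesz y (p + q) = Riesz y p + Riesz y q := by
  classical
  rw [Riesz_eq_sum_of_support_subset y MvPolynomial.support_add,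
    Riesz_eq_sum_of_support_subset y Finset.subset_union_left,
    Riesz_eq_sum_of_support_subset y Finset.subset_union_right, ← Finset.sum_add_distrib]
  simp only [coeff_add, add_mul]

noncomputable def rieszAddHom (y : (Fin n →₀ ℕ) → ℝ) : MvPolynomial (Fin n) ℝ →+ ℝ :=
  AddMonoidHom.mk' (Riesz y) (Riesz_add y)

lemma Riesz_sum (y : (Fin n →₀ ℕ) → ℝ) {ι : Type*} (s : Finset ι)
    (p : ι → MvPolynomial (Fin n) ℝ) :
    Riesz y (∑ i ∈ s, p i) = ∑ i ∈ s, Riesz y (p i) :=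
  map_sum (rieszAddHom y) p s

lemma Riesz_monomial (y : (Fin n →₀ ℕ) → ℝ) (γ : Fin n →₀ ℕ) (c : ℝ) :
    Riesz y (monomial γ c) = c * y γ := by
  classical
  rw [Riesz_eq_sum_of_support_subset y MvPolynomial.support_monomial_subset,
    Finset.sum_singleton, coeff_monomial, if_pos rfl]

lemma Riesz_mul_mul (y : (Fin n →₀ ℕ) → ℝ) (p q F : MvPolynomial (Fin n) ℝ) :
    Riesz y (p * q * F) = ∑ α ∈ p.support, ∑ β ∈ q.support, ∑ γ ∈ F.support,
      coeff α p * coeff β q * coeff γ F * y (α + β + γ) := by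
  have expand : p * q * F = ∑ α ∈ p.support, ∑ β ∈ q.support, ∑ γ ∈ F.support,
      monomial (α + β + γ) (coeff α p * coeff β q * coeff γ F) := by
    conv_lhs => rw [p.as_sum, q.as_sum, F.as_sum]
    simp_rw [Finset.sum_mul, Finset.mul_sum, monomial_mul, Finset.sum_mul, monomial_mul]
    exact Finset.sum_congr rfl fun α _ => Finset.sum_comm
  simp only [expand, Riesz_sum, Riesz_monomial]

lemma Riesz_mul_self_mul_nonneg {k : ℕ} {y : (Fin n →₀ ℕ) → ℝ} {F : MvPolynomial (Fin n) ℝ}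
    (hF : IsPSD (locMat k F y)) {q : MvPolynomial (Fin n) ℝ}
    (hq : q.totalDegree ≤ k - halfCeil F.totalDegree) :
    0 ≤ Riesz y (q * q * F) := by
  let v : (Fin n →₀ ℕ) →₀ ℝ := ⟨q.support, (coeff · q), fun _ => MvPolynomial.mem_support_iff⟩
  have hsupp (α : Fin n →₀ ℕ) (hα : α ∈ q.support) : mdeg α ≤ k - halfCeil F.totalDegree :=
    (mdeg_eq_sum α ▸ le_totalDegree hα).trans hq
  refine (hF.2 v).trans_eq ?_
  rw [Riesz_mul_mul]
  refine Finset.sum_congr rfl fun α hα => Finset.sum_congr rfl fun β hβ => ?_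
  rw [locMat, if_pos ⟨hsupp α hα, hsupp β hβ⟩, Finset.mul_sum, Finset.sum_mul]
  exact Finset.sum_congr rfl fun γ _ => by simp only [v, Finsupp.coe_mk]; ring

lemma Riesz_sum_sq_mul_nonneg {k : ℕ} {y : (Fin n →₀ ℕ) → ℝ} {F : MvPolynomial (Fin n) ℝ}
    (hF : IsPSD (locMat k F y)) {ι : Type*} (s : Finset ι) {q : ι → MvPolynomial (Fin n) ℝ}
    (hq : ∀ i ∈ s, (q i).totalDegree ≤ k - halfCeil F.totalDegree) :
    0 ≤ Riesz y ((∑ i ∈ s, q i ^ 2) * F) := by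
  simp only [Finset.sum_mul, Riesz_sum, sq]
  exact Finset.sum_nonneg fun i hi => Riesz_mul_self_mul_nonneg hF (hq i hi)

noncomputable def shiftedRiesz (y : (Fin n →₀ ℕ) → ℝ) (θ : Fin n →₀ ℕ) :
    MvPolynomial (Fin n) ℝ →+ ℝ :=
  (rieszAddHom y).comp (AddMonoidHom.mulLeft (monomial (θ + θ) 1))

lemma shiftedRiesz_apply (y : (Fin n →₀ ℕ) → ℝ) (θ : Fin n →₀ ℕ) (p : MvPolynomial (Fin n) ℝ) :
    shiftedRiesz y θ p = Riesz y (monomial (θ + θ) 1 * p) := rfl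

lemma shiftedRiesz_C (y : (Fin n →₀ ℕ) → ℝ) (θ : Fin n →₀ ℕ) (c : ℝ) :
    shiftedRiesz y θ (C c) = c * y (θ + θ) := by
  rw [shiftedRiesz_apply, C_apply, monomial_mul, one_mul, add_zero, Riesz_monomial]

lemma shiftedRiesz_monVecSq (y : (Fin n →₀ ℕ) → ℝ) (θ : Fin n →₀ ℕ) (d : ℕ) :
    shiftedRiesz y θ (monVecSq n d) = ∑ β ∈ degLE n d, y (β + β + (θ + θ)) := by
  simp only [monVecSq, map_sum, shiftedRiesz_apply, sq, monomial_mul, one_mul, Riesz_monomial,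
    add_comm (θ + θ)]

lemma shiftedRiesz_sos_mul_nonneg {k d : ℕ} {y : (Fin n →₀ ℕ) → ℝ}
    {F σ : MvPolynomial (Fin n) ℝ}
    (hF : IsPSD (locMat k F y)) (hσ : IsSos σ) (hdeg : (σ * F).totalDegree ≤ 2 * d)
    {θ : Fin n →₀ ℕ} (hθ : mdeg θ + d ≤ k) :
    0 ≤ shiftedRiesz y θ (σ * F) := by
  obtain ⟨L, p, rfl⟩ := hσ
  rcases eq_or_ne F 0 with rfl | hF0
  · rw [mul_zero, map_zero]
  rcases eq_or_ne (∑ l, p l ^ 2) 0 with hσ0 | hσ0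
  · rw [hσ0, zero_mul, map_zero]
  have hshift : monomial (θ + θ) 1 * ((∑ l, p l ^ 2) * F) =
      (∑ l, (monomial θ 1 * p l) ^ 2) * F := by
    simp only [← mul_assoc, Finset.mul_sum, mul_pow, sq (monomial θ (1 : ℝ)), monomial_mul,
      one_mul]
  rw [shiftedRiesz_apply, hshift]
  refine Riesz_sum_sq_mul_nonneg hF _ fun l _ =>
    (totalDegree_monomial_one_mul_le θ (p l)).trans ?_
  have hp := two_mul_totalDegree_le_totalDegree_sum_sq Finset.univ p (Finset.mem_univ l)
  rw [totalDegree_mul_of_isDomain hσ0 hF0] at hdeg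
  unfold halfCeil
  omega

lemma monVecSq_totalDegree_le (n d : ℕ) : (monVecSq n d).totalDegree ≤ 2 * d := by
  refine totalDegree_finsetSum_le fun β hβ => (totalDegree_pow _ _).trans ?_
  rw [totalDegree_monomial β one_ne_zero, ← mdeg_eq_sum]
  have hβd := (Finset.mem_filter.mp hβ).2
  omega

end Riesz

theorem shifted_moment_sum_bounded_of_AC_general {n r t : ℕ}
    (f : Fin r → MvPolynomial (Fin n) ℝ)
    (h : Fin t → MvPolynomial (Fin n) ℝ)
    (d : ℕ)
    -- Assumption AC:
    (Rv : ℝ)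
    (a₀ : MvPolynomial (Fin n) ℝ) (a : Fin r → MvPolynomial (Fin n) ℝ)
    (b : Fin t → MvPolynomial (Fin n) ℝ)
    (ha₀ : IsSos a₀) (ha : ∀ i, IsSos (a i)) (hb : ∀ j, IsSos (b j))
    (hda : ∀ i, (a i * f i).totalDegree ≤ 2 * d)
    (hdb : ∀ j, (b j * h j).totalDegree ≤ 2 * d)
    (hcert : MvPolynomial.C Rv - monVecSq n d = a₀ + ∑ i, a i * f i + ∑ j, b j * h j)
    -- a feasible point of the order-k moment relaxation:
    (k : ℕ) (hk : d ≤ k) (y : (Fin n →₀ ℕ) → ℝ)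
    (hmom : IsPSD (locMat k (1 : MvPolynomial (Fin n) ℝ) y))
    (hlf : ∀ i, IsPSD (locMat k (f i) y))
    (hlh : ∀ j, IsPSD (locMat k (h j) y)) :
    ∀ θ : Fin n →₀ ℕ, mdeg θ ≤ k - d →
      (∑ β ∈ degLE n d, y (β + β + (θ + θ))) ≤ Rv * y (θ + θ) := by
  intro θ hθ
  replace hθ : mdeg θ + d ≤ k := by omega
  have ha₀d : (a₀ * 1).totalDegree ≤ 2 * d := by
    rw [mul_one, show a₀ = C Rv - monVecSq n d - ∑ i, a i * f i - ∑ j, b j * h j by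
      rw [hcert]; ring]
    refine totalDegree_sub_le_of_le (totalDegree_sub_le_of_le (totalDegree_sub_le_of_le ?_
      (monVecSq_totalDegree_le n d)) (totalDegree_finsetSum_le fun i _ => hda i))
      (totalDegree_finsetSum_le fun j _ => hdb j)
    simp only [totalDegree_C, zero_le]
  have hcert_nonneg : 0 ≤ shiftedRiesz y θ (a₀ + ∑ i, a i * f i + ∑ j, b j * h j) := by
    simp only [map_add, map_sum]
    refine add_nonneg (add_nonneg ?_ ?_) ?_
    · simpa only [mul_one] using shiftedRiesz_sos_mul_nonneg hmom ha₀ ha₀d hθ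
    · exact Finset.sum_nonneg fun i _ => shiftedRiesz_sos_mul_nonneg (hlf i) (ha i) (hda i) hθ
    · exact Finset.sum_nonneg fun j _ => shiftedRiesz_sos_mul_nonneg (hlh j) (hb j) (hdb j) hθ
  rw [← hcert, map_sub, shiftedRiesz_C, shiftedRiesz_monVecSq] at hcert_nonneg
  linarith

/-- Under Assumption AC, for `k ≥ d` and any `y` feasible for the order-`k`
moment relaxation, every multi-index `θ` with `|θ| ≤ k − d` satisfies
`R·y_{2θ} ≥ ∑_{|β|≤d} y_{2β+2θ}`. -/
theorem shifted_moment_sum_bounded_of_AC {n m r t : ℕ}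
    (f : Fin r → MvPolynomial (Fin n) ℝ) (g : Fin t → MvPolynomial (Fin m) ℝ)
    (A : Matrix (Fin m) (Fin n) ℝ)
    (h : Fin t → MvPolynomial (Fin n) ℝ)
    (hh : ∀ j, h j = MvPolynomial.aeval
      (fun i : Fin m => ∑ l : Fin n, MvPolynomial.C (A i l) * MvPolynomial.X l) (g j))
    (d : ℕ)
    (hd : d = max (Finset.univ.sup fun i => halfCeil (f i).totalDegree)
                  (Finset.univ.sup fun j => halfCeil (h j).totalDegree))
    -- Assumption AC:
    (Rv : ℝ) (hR : 0 < Rv)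
    (a₀ : MvPolynomial (Fin n) ℝ) (a : Fin r → MvPolynomial (Fin n) ℝ)
    (b : Fin t → MvPolynomial (Fin n) ℝ)
    (ha₀ : IsSos a₀) (ha : ∀ i, IsSos (a i)) (hb : ∀ j, IsSos (b j))
    (hda : ∀ i, (a i * f i).totalDegree ≤ 2 * d)
    (hdb : ∀ j, (b j * h j).totalDegree ≤ 2 * d)
    (hcert : MvPolynomial.C Rv - monVecSq n d = a₀ + ∑ i, a i * f i + ∑ j, b j * h j)
    -- a feasible point of the order-k moment relaxation:
    (k : ℕ) (hk : d ≤ k) (y : (Fin n →₀ ℕ) → ℝ) (hy0 : y 0 = 1)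
    (hmom : IsPSD (locMat k (1 : MvPolynomial (Fin n) ℝ) y))
    (hlf : ∀ i, IsPSD (locMat k (f i) y))
    (hlh : ∀ j, IsPSD (locMat k (h j) y)) :
    ∀ θ : Fin n →₀ ℕ, mdeg θ ≤ k - d →
      (∑ β ∈ degLE n d, y (β + β + (θ + θ))) ≤ Rv * y (θ + θ) :=
  shifted_moment_sum_bounded_of_AC_general f h d Rv a₀ a b ha₀ ha hb hda hdb hcert k hk y hmom hlf
    hlh
end
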